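/- Let (X,d) be a Robinson space, let < be a compatible order of (X,d), and let S ⊆ X be an interval of <. Let rev_S be the total order obtained from < by reversing the order of the elements of S (i.e., x rev_S y iff either x < y and not both x,y ∈ S, or y < x and x,y ∈ S). Then rev_S is a compatible order of (X,d) if and only if S is an mmodule of (X,d). -/

import Mathlib

structure Dissim (X : Type*) where
  d : X → X → ℝ
  symm : ∀ x y, d x y = d y x
  nonneg : ∀ x y, 0 ≤ d x y
  self : ∀ x, d x x = 0

variable {X : Type*}

def Compatible (D : Dissim X) (lt : X → X → Prop) : Prop :=
  ∀ x y z : X, lt x y → lt y z → D.d x y ≤ D.d x z ∧ D.d y z ≤ D.d x z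

def IsCompatOrder (D : Dissim X) (lt : X → X → Prop) : Prop :=
  IsStrictTotalOrder X lt ∧ Compatible D lt

def Robinson (D : Dissim X) : Prop :=
  ∃ lt : X → X → Prop, IsCompatOrder D lt

def IsMmodule (D : Dissim X) (M : Set X) : Prop :=
  ∀ z ∉ M, ∀ x ∈ M, ∀ y ∈ M, D.d z x = D.d z y

def IsInterval (lt : X → X → Prop) (I : Set X) : Prop :=
  ∀ a b c : X, lt a b → lt b c → a ∈ I → c ∈ I → b ∈ I

def IsBlock (D : Dissim X) (Y : Set X) : Prop :=
  ∀ lt : X → X → Prop, IsCompatOrder D lt → IsInterval lt Y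

noncomputable def diam (D : Dissim X) (Y : Set X) : ℝ :=
  sSup (Set.image2 D.d Y Y)

def Gdelta (D : Dissim X) (δ : ℝ) : SimpleGraph X where
  Adj x y := x ≠ y ∧ D.d x y ≠ δ
  symm := by
    refine ⟨?_⟩
    rintro x y ⟨hxy, hd⟩
    exact ⟨hxy.symm, by rw [D.symm]; exact hd⟩
  loopless := by refine ⟨?_⟩; rintro x ⟨h, -⟩; exact h rfl

def Gle (D : Dissim X) (δ : ℝ) : SimpleGraph X where
  Adj x y := x ≠ y ∧ D.d x y ≤ δ
  symm := by
    refine ⟨?_⟩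
    rintro x y ⟨hxy, hd⟩
    exact ⟨hxy.symm, by rw [D.symm]; exact hd⟩
  loopless := by refine ⟨?_⟩; rintro x ⟨h, -⟩; exact h rfl

def Glt (D : Dissim X) (δ : ℝ) : SimpleGraph X where
  Adj x y := x ≠ y ∧ D.d x y < δ
  symm := by
    refine ⟨?_⟩
    rintro x y ⟨hxy, hd⟩
    exact ⟨hxy.symm, by rw [D.symm]; exact hd⟩
  loopless := by refine ⟨?_⟩; rintro x ⟨h, -⟩; exact h rfl

def IsCompOf {V : Type*} (G : SimpleGraph V) (C : Set V) : Prop :=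
  ∃ x : V, C = {y | G.Reachable x y}

def MMax (D : Dissim X) : Set (Set X) :=
  {M | IsMmodule D M ∧ M ≠ Set.univ ∧
    ∀ M' : Set X, IsMmodule D M' → M' ≠ Set.univ → M ⊆ M' → M = M'}

def IsPartition {α : Type*} (P : Set (Set α)) : Prop :=
  (∀ A ∈ P, A.Nonempty) ∧
  (∀ A ∈ P, ∀ B ∈ P, A ≠ B → Disjoint A B) ∧
  ⋃₀ P = Set.univ

def IsCopartition {α : Type*} (P : Set (Set α)) : Prop :=
  IsPartition ((fun M => Mᶜ) '' P)

def SimpleGraph.restrictTo {V : Type*} (G : SimpleGraph V) (S : Set V) : SimpleGraph V where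
  Adj x y := x ∈ S ∧ y ∈ S ∧ G.Adj x y
  symm := by refine ⟨?_⟩; rintro x y ⟨hx, hy, h⟩; exact ⟨hy, hx, h.symm⟩
  loopless := by refine ⟨?_⟩; rintro x ⟨-, -, h⟩; exact G.irrefl h

def ConnectedWithin {V : Type*} (G : SimpleGraph V) (S : Set V) : Prop :=
  S.Nonempty ∧ ∀ x ∈ S, ∀ y ∈ S, (G.restrictTo S).Reachable x y

def IsCompWithin {V : Type*} (G : SimpleGraph V) (S : Set V) (C : Set V) : Prop :=
  ∃ x ∈ S, C = {y | (G.restrictTo S).Reachable x y}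

def IsStrictTotalOrderOn {α : Type*} (S : Set α) (lt : α → α → Prop) : Prop :=
  (∀ x ∈ S, ¬ lt x x) ∧
  (∀ x ∈ S, ∀ y ∈ S, ∀ z ∈ S, lt x y → lt y z → lt x z) ∧
  (∀ x ∈ S, ∀ y ∈ S, x ≠ y → (lt x y ∨ lt y x) ∧ ¬ (lt x y ∧ lt y x))

def CompatibleOn (D : Dissim X) (S : Set X) (lt : X → X → Prop) : Prop :=
  ∀ x ∈ S, ∀ y ∈ S, ∀ z ∈ S, lt x y → lt y z → D.d x y ≤ D.d x z ∧ D.d y z ≤ D.d x z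

def IsCompatOrderOn (D : Dissim X) (S : Set X) (lt : X → X → Prop) : Prop :=
  IsStrictTotalOrderOn S lt ∧ CompatibleOn D S lt

def FlatOn (D : Dissim X) (S : Set X) : Prop :=
  ∃ lt : X → X → Prop, IsCompatOrderOn D S lt ∧ (∃ x ∈ S, ∃ y ∈ S, lt x y) ∧
    ∀ lt' : X → X → Prop, IsCompatOrderOn D S lt' →
      (∀ x ∈ S, ∀ y ∈ S, (lt' x y ↔ lt x y)) ∨ (∀ x ∈ S, ∀ y ∈ S, (lt' x y ↔ lt y x))

def Flat (D : Dissim X) : Prop :=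
  ∃ lt : X → X → Prop, IsCompatOrder D lt ∧ (∃ x y : X, lt x y) ∧
    ∀ lt' : X → X → Prop, IsCompatOrder D lt' →
      (∀ x y : X, lt' x y ↔ lt x y) ∨ (∀ x y : X, lt' x y ↔ lt y x)

def IsCopointAt (D : Dissim X) (p : X) (C : Set X) : Prop :=
  IsMmodule D C ∧ C.Nonempty ∧ p ∉ C ∧
  ∀ C' : Set X, IsMmodule D C' → p ∉ C' → C ⊆ C' → C = C'

def bigGraph (D : Dissim X) (δ : ℝ) (I : Set (Set X)) : SimpleGraph (Set X) where
  Adj C C' := C ∈ I ∧ C' ∈ I ∧ C ≠ C' ∧ ∃ x ∈ C, ∃ y ∈ C', δ < D.d x y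
  symm := by
    refine ⟨?_⟩
    rintro C C' ⟨hC, hC', hne, x, hx, y, hy, hd⟩
    exact ⟨hC', hC, hne.symm, y, hy, x, hx, by rw [D.symm]; exact hd⟩
  loopless := by refine ⟨?_⟩; rintro C ⟨-, -, hne, -⟩; exact hne rfl

/-!
Inside `S` the reversed order is the reverse of `<`, outside it agrees with `<`, and since `S`
is an interval every point outside `S` lies on the same side of all of `S`. So, besides triples
inside `S` (where reversal is harmless), the only triples whose compatibility is in question
consist of two points `x, y ∈ S` and one point `z ∉ S`; for these, compatibility of `<` and
of the reversed order give opposite inequalities between `d(z, x)` and `d(z, y)`, and both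
hold exactly when `d(z, x) = d(z, y)`.
-/

def reverseOn (lt : X → X → Prop) (S : Set X) (x y : X) : Prop :=
  (lt x y ∧ ¬ (x ∈ S ∧ y ∈ S)) ∨ (lt y x ∧ x ∈ S ∧ y ∈ S)

section

variable {lt : X → X → Prop} {S : Set X} {x y z : X}

theorem reverseOn_iff_of_mem (hx : x ∈ S) (hy : y ∈ S) : reverseOn lt S x y ↔ lt y x := by
  simp [reverseOn, hx, hy]

theorem reverseOn_iff_of_not_both_mem (hxy : ¬ (x ∈ S ∧ y ∈ S)) :
    reverseOn lt S x y ↔ lt x y := by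
  simp [reverseOn, hxy]

theorem IsInterval.lt_of_notMem_of_lt [Std.Trichotomous lt] (hS : IsInterval lt S)
    (hx : x ∉ S) (hy : y ∈ S) (hz : z ∈ S) (hxy : lt x y) : lt x z := by
  rcases trichotomous_of lt x z with hxz | rfl | hzx
  · exact hxz
  · exact absurd hz hx
  · exact absurd (hS z x y hzx hxy hz hy) hx

theorem IsInterval.lt_of_notMem_of_gt [Std.Trichotomous lt] (hS : IsInterval lt S)
    (hx : x ∉ S) (hy : y ∈ S) (hz : z ∈ S) (hyx : lt y x) : lt z x := by
  rcases trichotomous_of lt z x with hzx | rfl | hxz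
  · exact hzx
  · exact absurd hz hx
  · exact absurd (hS y x z hyx hxz hy hz) hx

theorem IsInterval.isStrictTotalOrder_reverseOn [IsStrictTotalOrder X lt]
    (hS : IsInterval lt S) : IsStrictTotalOrder X (reverseOn lt S) where
  trichotomous a b hab hba := by
    by_cases h : a ∈ S ∧ b ∈ S
    · rw [reverseOn_iff_of_mem h.1 h.2] at hab
      rw [reverseOn_iff_of_mem h.2 h.1] at hba
      exact (Std.Trichotomous.trichotomous b a hab hba).symm
    · rw [reverseOn_iff_of_not_both_mem h] at hab
      rw [reverseOn_iff_of_not_both_mem (h ∘ And.symm)] at hba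
      exact Std.Trichotomous.trichotomous a b hab hba
  irrefl a h := by
    rcases h with ⟨h, -⟩ | ⟨h, -⟩ <;> exact irrefl a h
  trans a b c hab hbc := by
    rcases hab with ⟨hab, hnab⟩ | ⟨hba, ha, hb⟩ <;>
      rcases hbc with ⟨hbc, hnbc⟩ | ⟨hcb, hb', hc⟩
    · exact .inl ⟨_root_.trans hab hbc, fun hac => hnab ⟨hac.1, hS a b c hab hbc hac.1 hac.2⟩⟩
    · have ha : a ∉ S := fun ha => hnab ⟨ha, hb'⟩
      exact .inl ⟨hS.lt_of_notMem_of_lt ha hb' hc hab, fun hac => ha hac.1⟩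
    · have hc : c ∉ S := fun hc => hnbc ⟨hb, hc⟩
      exact .inl ⟨hS.lt_of_notMem_of_gt hc hb ha hbc, fun hac => hc hac.2⟩
    · exact .inr ⟨_root_.trans hcb hba, ha, hc⟩

variable {D : Dissim X}

theorem IsInterval.compatible_reverseOn [Std.Trichotomous lt] (hS : IsInterval lt S)
    (hc : Compatible D lt) (hM : IsMmodule D S) : Compatible D (reverseOn lt S) := by
  intro x y z hxy hyz
  by_cases hxyS : x ∈ S ∧ y ∈ S <;> by_cases hyzS : y ∈ S ∧ z ∈ S
  · rw [reverseOn_iff_of_mem hxyS.1 hxyS.2] at hxy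
    rw [reverseOn_iff_of_mem hyzS.1 hyzS.2] at hyz
    have := hc z y x hyz hxy
    rw [D.symm x y, D.symm y z, D.symm x z]
    exact this.symm
  · have hz : z ∉ S := fun hz => hyzS ⟨hxyS.2, hz⟩
    rw [reverseOn_iff_of_mem hxyS.1 hxyS.2] at hxy
    rw [reverseOn_iff_of_not_both_mem hyzS] at hyz
    have hxz := hS.lt_of_notMem_of_gt hz hxyS.2 hxyS.1 hyz
    have hyxz := hc y x z hxy hxz
    have hzx : D.d x z = D.d y z := by
      rw [D.symm x z, D.symm y z]; exact hM z hz x hxyS.1 y hxyS.2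
    rw [D.symm x y, hzx]
    exact ⟨hyxz.1, le_rfl⟩
  · have hx : x ∉ S := fun hx => hxyS ⟨hx, hyzS.1⟩
    rw [reverseOn_iff_of_not_both_mem hxyS] at hxy
    rw [reverseOn_iff_of_mem hyzS.1 hyzS.2] at hyz
    have hxz := hS.lt_of_notMem_of_lt hx hyzS.1 hyzS.2 hxy
    have hxzy := hc x z y hxz hyz
    have hxy_eq : D.d x y = D.d x z := hM x hx y hyzS.1 z hyzS.2
    rw [← hxy_eq, D.symm y z]
    exact ⟨le_rfl, hxzy.2⟩
  · rw [reverseOn_iff_of_not_both_mem hxyS] at hxy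
    rw [reverseOn_iff_of_not_both_mem hyzS] at hyz
    exact hc x y z hxy hyz

theorem IsInterval.isMmodule_of_compatible_reverseOn [Std.Trichotomous lt]
    (hS : IsInterval lt S) (hc : Compatible D lt) (hrev : Compatible D (reverseOn lt S)) :
    IsMmodule D S := by
  suffices key : ∀ a ∈ S, ∀ b ∈ S, lt a b → ∀ z ∉ S, D.d z a = D.d z b by
    intro z hz x hx y hy
    rcases trichotomous_of lt x y with hxy | rfl | hyx
    · exact key x hx y hy hxy z hz
    · rfl
    · exact (key y hy x hx hyx z hz).symm
  intro a ha b hb hab z hz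
  have hba : reverseOn lt S b a := (reverseOn_iff_of_mem hb ha).2 hab
  rcases trichotomous_of lt z a with hza | rfl | haz
  · have hzb := hS.lt_of_notMem_of_lt hz ha hb hza
    have hzb' : reverseOn lt S z b := (reverseOn_iff_of_not_both_mem fun h => hz h.1).2 hzb
    exact le_antisymm (hc z a b hza hab).1 (hrev z b a hzb' hba).1
  · exact absurd ha hz
  · have hbz := hS.lt_of_notMem_of_gt hz ha hb haz
    have haz' : reverseOn lt S a z := (reverseOn_iff_of_not_both_mem fun h => hz h.2).2 haz
    rw [D.symm z a, D.symm z b]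
    exact le_antisymm (hrev b a z hba haz').2 (hc a b z hab hbz).2

end

theorem stmt1_general (D : Dissim X)
    (lt : X → X → Prop) (h : IsCompatOrder D lt)
    (S : Set X) (hInt : IsInterval lt S)
    (rev : X → X → Prop)
    (hrev : ∀ x y : X, rev x y ↔
      ((lt x y ∧ ¬ (x ∈ S ∧ y ∈ S)) ∨ (lt y x ∧ x ∈ S ∧ y ∈ S))) :
    IsCompatOrder D rev ↔ IsMmodule D S := by
  obtain ⟨hlt, hc⟩ := h
  obtain rfl : rev = reverseOn lt S := funext₂ fun x y => propext (hrev x y)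
  exact ⟨fun hrevc => hInt.isMmodule_of_compatible_reverseOn hc hrevc.2,
    fun hM => ⟨hInt.isStrictTotalOrder_reverseOn, hInt.compatible_reverseOn hc hM⟩⟩

/-- reversing an interval S of a compatible order gives a compatible
order iff S is an mmodule. -/
theorem stmt1 [Fintype X] [Nonempty X] (D : Dissim X)
    (lt : X → X → Prop) (h : IsCompatOrder D lt)
    (S : Set X) (hInt : IsInterval lt S)
    (rev : X → X → Prop)
    (hrev : ∀ x y : X, rev x y ↔
      ((lt x y ∧ ¬ (x ∈ S ∧ y ∈ S)) ∨ (lt y x ∧ x ∈ S ∧ y ∈ S))) :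
    IsCompatOrder D rev ↔ IsMmodule D S :=
  stmt1_general D lt h S hInt rev hrev
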